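/- Uniqueness forces Schur complement collapse: if a partial covariance K_Ω on the 2-serrated domain Ω = (I₁×I₁)∪(I₂×I₂), J = I₁∩I₂, admits a unique completion K⋆, then K_{I₁}/K_J = K⋆/K_{I₂} and K_{I₂}/K_J = K⋆/K_{I₁}, i.e. the Schur complement of the full completion with respect to I₂ equals that of K_{I₁} with respect to the overlap J (and symmetrically). -/

import Mathlib

/-!
Fill the entries outside `Ω` with `⟪a s, a t⟫ = K_{sJ} K_J⁻¹ K_{Jt}`. This kernel is the Gram
kernel of `a` plus the Schur complements `K_{I₁}/K_J` and `K_{I₂}/K_J` extended by zero, so it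
is a covariance completion, and by uniqueness it is `K⋆`. Hence for `s ∈ I₁ ∖ I₂` the section
`K⋆(s, ·)` on `I₂` is `⟪a s, a ·⟫`. Since `ψ₂ u ↦ a u` is a contraction sending `b t` to `a t`,
pairing with `b s` passes through it, and `⟪b s, b t⟫ = ⟪a s, a t⟫`.
-/

open Set MeasureTheory
open scoped RealInnerProductSpace Classical

noncomputable section

/-- `K` is a covariance kernel on the set `S`: symmetric and positive semidefinite. -/
def IsCovOn {I : Type*} (S : Set I) (K : I → I → ℝ) : Prop :=
  (∀ s ∈ S, ∀ t ∈ S, K s t = K t s) ∧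
  ∀ (n : ℕ) (t : Fin n → I), (∀ i, t i ∈ S) → ∀ c : Fin n → ℝ,
    0 ≤ ∑ i, ∑ j, c i * c j * K (t i) (t j)

/-- `Ω` is a symmetric domain containing the diagonal. -/
def IsSymmDomain {I : Type*} (Ω : Set (I × I)) : Prop :=
  (∀ s t : I, (s, t) ∈ Ω ↔ (t, s) ∈ Ω) ∧ ∀ t : I, (t, t) ∈ Ω

/-- `K` is a partial covariance on `Ω`: each square inside `Ω` carries a covariance. -/
def IsPartialCov {I : Type*} (Ω : Set (I × I)) (K : I → I → ℝ) : Prop :=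
  ∀ J : Set I, J ×ˢ J ⊆ Ω → IsCovOn J K

/-- `K` is a covariance-kernel completion of `KΩ` from the domain `Ω`. -/
def IsCompletion {I : Type*} (Ω : Set (I × I)) (KΩ K : I → I → ℝ) : Prop :=
  IsCovOn (univ : Set I) K ∧ ∀ p ∈ Ω, K p.1 p.2 = KΩ p.1 p.2

/-- `a ∈ H` represents the function `f : J → ℝ` in the (abstract realization via the feature
map `φ` of the) RKHS of the kernel realized by `φ`: `a` lies in the closed span of the
features and the reproducing formula `f u = ⟪a, φ u⟫` holds. -/
def RepIn {J : Type*} {H : Type*} [NormedAddCommGroup H] [InnerProductSpace ℝ H]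
    (φ : J → H) (a : H) (f : J → ℝ) : Prop :=
  a ∈ closure ((Submodule.span ℝ (Set.range φ) : Submodule ℝ H) : Set H) ∧
  ∀ u : J, f u = ⟪a, φ u⟫

open Filter Topology

section FeatureMaps

variable {E F : Type*} [NormedAddCommGroup E] [InnerProductSpace ℝ E]
  [NormedAddCommGroup F] [InnerProductSpace ℝ F] {J : Type*} {φ : J → E} {ψ : J → F}

theorem norm_sum_smul_sq {ι : Type*} (s : Finset ι) (c : ι → ℝ) (x : ι → E) :
    ‖∑ i ∈ s, c i • x i‖ ^ 2 = ∑ i ∈ s, ∑ j ∈ s, c i * c j * ⟪x i, x j⟫ := by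
  simp only [← real_inner_self_eq_norm_sq, sum_inner, inner_sum, real_inner_smul_left,
    real_inner_smul_right]
  exact Finset.sum_congr rfl fun i _ => Finset.sum_congr rfl fun j _ => by
    rw [real_inner_comm]; ring

theorem inner_linearCombination_eq_of_inner_eq {x : E} {y : F}
    (h : ∀ u, ⟪x, φ u⟫ = ⟪y, ψ u⟫) (c : J →₀ ℝ) :
    ⟪x, Finsupp.linearCombination ℝ φ c⟫ = ⟪y, Finsupp.linearCombination ℝ ψ c⟫ := by
  induction c using Finsupp.induction_linear with
  | zero => simp
  | add c d hc hd => simp only [map_add, inner_add_right, hc, hd]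
  | single u r => simp only [Finsupp.linearCombination_single, real_inner_smul_right, h u]

theorem norm_linearCombination_eq_of_inner_eq (h : ∀ u v, ⟪φ u, φ v⟫ = ⟪ψ u, ψ v⟫)
    (c : J →₀ ℝ) :
    ‖Finsupp.linearCombination ℝ φ c‖ = ‖Finsupp.linearCombination ℝ ψ c‖ := by
  have hfeat (u : J) := inner_linearCombination_eq_of_inner_eq (h u) c
  have hself : ⟪Finsupp.linearCombination ℝ φ c, Finsupp.linearCombination ℝ φ c⟫ =
      ⟪Finsupp.linearCombination ℝ ψ c, Finsupp.linearCombination ℝ ψ c⟫ :=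
    inner_linearCombination_eq_of_inner_eq
      (fun u => by rw [real_inner_comm, hfeat, real_inner_comm]) c
  rw [norm_eq_sqrt_real_inner, norm_eq_sqrt_real_inner, hself]

/-- Since `φ u ↦ ψ u` is isometric on the span of `φ`, `⟪x, w⟫ ≤ ‖y‖ * ‖w‖` holds there, and
it passes to the closure, which contains `x`. -/
theorem norm_le_norm_of_inner_eq (h : ∀ u v, ⟪φ u, φ v⟫ = ⟪ψ u, ψ v⟫) {x : E} {y : F}
    (hx : x ∈ (Submodule.span ℝ (range φ)).topologicalClosure)
    (hxy : ∀ u, ⟪x, φ u⟫ = ⟪y, ψ u⟫) : ‖x‖ ≤ ‖y‖ := by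
  have hspan : (Submodule.span ℝ (range φ) : Set E) ⊆ {w | ⟪x, w⟫ ≤ ‖y‖ * ‖w‖} := by
    rw [← Finsupp.range_linearCombination]
    rintro _ ⟨c, rfl⟩
    calc ⟪x, Finsupp.linearCombination ℝ φ c⟫ = ⟪y, Finsupp.linearCombination ℝ ψ c⟫ :=
          inner_linearCombination_eq_of_inner_eq hxy c
      _ ≤ ‖y‖ * ‖Finsupp.linearCombination ℝ ψ c‖ := real_inner_le_norm _ _
      _ = ‖y‖ * ‖Finsupp.linearCombination ℝ φ c‖ := by
          rw [norm_linearCombination_eq_of_inner_eq h]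
  have hxx : ⟪x, x⟫ ≤ ‖y‖ * ‖x‖ :=
    closure_minimal hspan (isClosed_le (by fun_prop) (by fun_prop))
      (by rwa [← Submodule.topologicalClosure_coe])
  rw [real_inner_self_eq_norm_mul_norm] at hxx
  nlinarith [norm_nonneg x, norm_nonneg y]

theorem eq_of_inner_eq_of_mem_topologicalClosure {x y : E}
    (hx : x ∈ (Submodule.span ℝ (range φ)).topologicalClosure)
    (hy : y ∈ (Submodule.span ℝ (range φ)).topologicalClosure)
    (hxy : ∀ u, ⟪x, φ u⟫ = ⟪y, φ u⟫) : x = y := by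
  have h := norm_le_norm_of_inner_eq (fun _ _ => rfl) (sub_mem hx hy) (y := (0 : E))
    (fun u => by rw [inner_sub_left, hxy, sub_self, inner_zero_left])
  rwa [norm_zero, norm_le_zero_iff, sub_eq_zero] at h

end FeatureMaps

section Covariance

variable {I : Type*}

theorem IsCovOn.add {S : Set I} {K L : I → I → ℝ} (hK : IsCovOn S K) (hL : IsCovOn S L) :
    IsCovOn S (fun s t => K s t + L s t) := by
  refine ⟨fun s hs t ht => by dsimp only; rw [hK.1 s hs t ht, hL.1 s hs t ht],
    fun n t ht c => ?_⟩
  simpa only [mul_add, Finset.sum_add_distrib] using add_nonneg (hK.2 n t ht c) (hL.2 n t ht c)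

theorem isCovOn_inner {E : Type*} [NormedAddCommGroup E] [InnerProductSpace ℝ E]
    (S : Set I) (a : I → E) : IsCovOn S (fun s t => ⟪a s, a t⟫) :=
  ⟨fun _ _ _ _ => real_inner_comm _ _, fun n t _ c => by rw [← norm_sum_smul_sq]; positivity⟩

theorem IsCovOn.ite_mem {S : Set I} {K : I → I → ℝ} (hK : IsCovOn S K) :
    IsCovOn univ (fun s t => if s ∈ S ∧ t ∈ S then K s t else 0) := by
  refine ⟨fun s _ t _ => ?_, fun n t _ c => ?_⟩
  · dsimp only
    by_cases h : s ∈ S ∧ t ∈ S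
    · rw [if_pos h, if_pos h.symm, hK.1 s h.1 t h.2]
    · rw [if_neg h, if_neg (mt And.symm h)]
  by_cases hS : ∃ i, t i ∈ S
  · obtain ⟨i₀, hi₀⟩ := hS
    convert hK.2 n (fun i => if t i ∈ S then t i else t i₀) (fun i => by split_ifs <;> assumption)
      (fun i => if t i ∈ S then c i else 0) using 3 with i _ j _
    by_cases hi : t i ∈ S <;> by_cases hj : t j ∈ S <;> simp [hi, hj]
  · simp only [not_exists] at hS
    simp [hS]

end Covariance

section SchurComplement

variable {E F : Type*} [NormedAddCommGroup E] [InnerProductSpace ℝ E]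
  [NormedAddCommGroup F] [InnerProductSpace ℝ F]
  {I : Type*} {K : I → I → ℝ} {J B : Set I} {φ : J → E} {a : I → E} {ψ : B → F}

theorem RepIn.mem_topologicalClosure {ι : Type*} {φ : ι → E} {x : E} {f : ι → ℝ}
    (h : RepIn φ x f) : x ∈ (Submodule.span ℝ (range φ)).topologicalClosure := by
  rw [← SetLike.mem_coe, Submodule.topologicalClosure_coe]
  exact h.1

theorem inner_representer_eq_of_mem (hφ : ∀ u v : J, K u v = ⟪φ u, φ v⟫)
    (ha : ∀ s, RepIn φ (a s) (fun u : J => K s u)) (s : I) (u : J) :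
    ⟪a s, a u⟫ = K s u := by
  have hrep (s : I) (v : J) : K s v = ⟪a s, φ v⟫ := (ha s).2 v
  have hau : a u = φ u :=
    eq_of_inner_eq_of_mem_topologicalClosure (ha u).mem_topologicalClosure
      (Submodule.le_topologicalClosure _ (Submodule.subset_span ⟨u, rfl⟩))
      (fun v => by rw [← hrep, hφ])
  rw [hau, ← hrep]

theorem inner_feature_eq_of_subset (hJB : J ⊆ B) (hφ : ∀ u v : J, K u v = ⟪φ u, φ v⟫)
    (hψ : ∀ u v : B, K u v = ⟪ψ u, ψ v⟫) (u v : J) :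
    ⟪φ u, φ v⟫ = ⟪ψ ⟨u, hJB u.2⟩, ψ ⟨v, hJB v.2⟩⟫ := by
  rw [← hφ, ← hψ]

theorem isCovOn_sub_inner_representer (hJB : J ⊆ B) (hφ : ∀ u v : J, K u v = ⟪φ u, φ v⟫)
    (ha : ∀ s, RepIn φ (a s) (fun u : J => K s u)) (hψ : ∀ u v : B, K u v = ⟪ψ u, ψ v⟫) :
    IsCovOn B (fun s t => K s t - ⟪a s, a t⟫) := by
  have hrep (s : I) (v : J) : K s v = ⟪a s, φ v⟫ := (ha s).2 v
  refine ⟨fun s hs t ht => ?_, fun n t ht c => ?_⟩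
  · dsimp only
    rw [hψ ⟨s, hs⟩ ⟨t, ht⟩, hψ ⟨t, ht⟩ ⟨s, hs⟩, real_inner_comm (ψ _), real_inner_comm (a s)]
  have hle : ‖∑ i, c i • a (t i)‖ ≤ ‖∑ i, c i • ψ ⟨t i, ht i⟩‖ := by
    refine norm_le_norm_of_inner_eq (inner_feature_eq_of_subset hJB hφ hψ)
      (sum_mem fun i _ => Submodule.smul_mem _ _ (ha _).mem_topologicalClosure) (fun u => ?_)
    simp only [sum_inner, real_inner_smul_left, ← hrep, ← hψ]
  have hsq := pow_le_pow_left₀ (norm_nonneg _) hle 2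
  simp only [norm_sum_smul_sq, ← hψ] at hsq
  simpa only [mul_sub, Finset.sum_sub_distrib, sub_nonneg] using hsq

theorem inner_representer_eq_of_forall_mem (hJB : J ⊆ B) (hφ : ∀ u v : J, K u v = ⟪φ u, φ v⟫)
    (ha : ∀ s, RepIn φ (a s) (fun u : J => K s u)) (hψ : ∀ u v : B, K u v = ⟪ψ u, ψ v⟫)
    {b : I → F} (hb : ∀ s, RepIn ψ (b s) (fun u : B => K s u)) {s : I}
    (hs : ∀ u : B, K s u = ⟪a s, a u⟫) (t : I) : ⟪b s, b t⟫ = ⟪a s, a t⟫ := by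
  have hrepa (s : I) (v : J) : K s v = ⟪a s, φ v⟫ := (ha s).2 v
  have hrepb (s : I) (v : B) : K s v = ⟪b s, ψ v⟫ := (hb s).2 v
  obtain ⟨w, hw, hwt⟩ := mem_closure_iff_seq_limit.mp (hb t).1
  simp only [← Finsupp.range_linearCombination, SetLike.mem_coe, LinearMap.mem_range] at hw
  choose c hc using hw
  have hvt : Tendsto (fun n => Finsupp.linearCombination ℝ (fun u : B => a u) (c n)) atTop
      (𝓝 (a t)) := by
    refine tendsto_iff_norm_sub_tendsto_zero.mpr (squeeze_zero (fun _ => norm_nonneg _)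
      (fun n => ?_) (tendsto_iff_norm_sub_tendsto_zero.mp hwt))
    rw [← hc n]
    refine norm_le_norm_of_inner_eq (inner_feature_eq_of_subset hJB hφ hψ)
      (sub_mem ?_ (ha t).mem_topologicalClosure) (fun u => ?_)
    · rw [Finsupp.linearCombination_apply]
      exact Submodule.finsuppSum_mem _ _ _ _
        fun u _ => Submodule.smul_mem _ _ (ha u).mem_topologicalClosure
    have hlc : ⟪Finsupp.linearCombination ℝ (fun v : B => a v) (c n), φ u⟫ =
        ⟪Finsupp.linearCombination ℝ ψ (c n), ψ ⟨u, hJB u.2⟩⟫ := by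
      rw [real_inner_comm, real_inner_comm (ψ _)]
      exact inner_linearCombination_eq_of_inner_eq
        (fun v => by rw [real_inner_comm, ← hrepa, real_inner_comm, ← hψ]) (c n)
    rw [inner_sub_left, inner_sub_left, hlc, ← hrepa, ← hrepb]
  have hinner (n : ℕ) :
      ⟪b s, w n⟫ = ⟪a s, Finsupp.linearCombination ℝ (fun u : B => a u) (c n)⟫ := by
    rw [← hc n]
    exact inner_linearCombination_eq_of_inner_eq (fun u => by rw [← hrepb, hs]) (c n)
  refine tendsto_nhds_unique (tendsto_const_nhds.inner hwt) ?_
  simpa only [hinner] using tendsto_const_nhds.inner hvt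

end SchurComplement

section Completion

variable {E : Type*} [NormedAddCommGroup E] [InnerProductSpace ℝ E] {I : Type*}

/-- For Gaussian processes, this completion makes `I₁ ∖ I₂` and `I₂ ∖ I₁` conditionally
independent given `I₁ ∩ I₂`. -/
def schurCompletion (I₁ I₂ : Set I) (K : I → I → ℝ) (a : I → E) (s t : I) : ℝ :=
  if (s, t) ∈ I₁ ×ˢ I₁ ∪ I₂ ×ˢ I₂ then K s t else ⟪a s, a t⟫

theorem schurCompletion_comm (I₁ I₂ : Set I) (K : I → I → ℝ) (a : I → E) :
    schurCompletion I₁ I₂ K a = schurCompletion I₂ I₁ K a := by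
  ext s t
  simp only [schurCompletion, mem_union, or_comm]

variable {I₁ I₂ : Set I} {K : I → I → ℝ} {a : I → E}

theorem schurCompletion_eq_add (hKa : ∀ s, ∀ u ∈ I₁ ∩ I₂, ⟪a s, a u⟫ = K s u) (s t : I) :
    schurCompletion I₁ I₂ K a s t = ⟪a s, a t⟫ +
      (if s ∈ I₁ ∧ t ∈ I₁ then K s t - ⟪a s, a t⟫ else 0) +
      (if s ∈ I₂ ∧ t ∈ I₂ then K s t - ⟪a s, a t⟫ else 0) := by
  by_cases h₁ : s ∈ I₁ ∧ t ∈ I₁ <;> by_cases h₂ : s ∈ I₂ ∧ t ∈ I₂ <;>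
    simp [schurCompletion, h₁, h₂]
  rw [hKa s t ⟨h₁.2, h₂.2⟩, sub_self]

theorem isCovOn_schurCompletion {F₁ F₂ : Type*} [NormedAddCommGroup F₁]
    [InnerProductSpace ℝ F₁] [NormedAddCommGroup F₂] [InnerProductSpace ℝ F₂]
    {φ : ↥(I₁ ∩ I₂) → E} (hφ : ∀ u v : ↥(I₁ ∩ I₂), K u v = ⟪φ u, φ v⟫)
    (ha : ∀ s, RepIn φ (a s) (fun u : ↥(I₁ ∩ I₂) => K s u))
    {ψ₁ : I₁ → F₁} (hψ₁ : ∀ u v : I₁, K u v = ⟪ψ₁ u, ψ₁ v⟫)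
    {ψ₂ : I₂ → F₂} (hψ₂ : ∀ u v : I₂, K u v = ⟪ψ₂ u, ψ₂ v⟫) :
    IsCovOn univ (schurCompletion I₁ I₂ K a) := by
  have hsum := ((isCovOn_inner univ a).add
    (isCovOn_sub_inner_representer inter_subset_left hφ ha hψ₁).ite_mem).add
    (isCovOn_sub_inner_representer inter_subset_right hφ ha hψ₂).ite_mem
  rwa [funext₂ (schurCompletion_eq_add fun s u hu =>
    inner_representer_eq_of_mem hφ ha s ⟨u, hu⟩)]

theorem eq_inner_of_schurCompletion_eq (hKa : ∀ s, ∀ u ∈ I₁ ∩ I₂, ⟪a s, a u⟫ = K s u)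
    (hC : schurCompletion I₁ I₂ K a = K) {s u : I} (hs : s ∉ I₂) (hu : u ∈ I₂) :
    K s u = ⟪a s, a u⟫ := by
  by_cases hu₁ : u ∈ I₁
  · exact (hKa s u ⟨hu₁, hu⟩).symm
  · rw [← hC]
    simp [schurCompletion, hs, hu₁]

end Completion

theorem uniqueness_schur_collapse_general {I : Type*} (I₁ I₂ : Set I)
    (hcover : I₁ ∪ I₂ = univ)
    (KΩ : I → I → ℝ)
    (Kstar : I → I → ℝ)
    (hK : IsCompletion ((I₁ ×ˢ I₁) ∪ (I₂ ×ˢ I₂)) KΩ Kstar)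
    (huniq : ∀ K' : I → I → ℝ,
      IsCompletion ((I₁ ×ˢ I₁) ∪ (I₂ ×ˢ I₂)) KΩ K' → K' = Kstar)
    (H : Type*) [NormedAddCommGroup H] [InnerProductSpace ℝ H]
    (φ : ↥(I₁ ∩ I₂) → H)
    (hφ : ∀ u v : ↥(I₁ ∩ I₂), KΩ u.1 v.1 = ⟪φ u, φ v⟫)
    (a : I → H)
    (ha : ∀ s : I, RepIn φ (a s) (fun u : ↥(I₁ ∩ I₂) => KΩ s u.1))
    (H₂ : Type*) [NormedAddCommGroup H₂] [InnerProductSpace ℝ H₂]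
    (ψ₂ : ↥I₂ → H₂)
    (hψ₂ : ∀ u v : ↥I₂, Kstar u.1 v.1 = ⟪ψ₂ u, ψ₂ v⟫)
    (b : I → H₂)
    (hb : ∀ s : I, RepIn ψ₂ (b s) (fun u : ↥I₂ => Kstar s u.1))
    (H₁ : Type*) [NormedAddCommGroup H₁] [InnerProductSpace ℝ H₁]
    (ψ₁ : ↥I₁ → H₁)
    (hψ₁ : ∀ u v : ↥I₁, Kstar u.1 v.1 = ⟪ψ₁ u, ψ₁ v⟫)
    (c : I → H₁)
    (hc : ∀ s : I, RepIn ψ₁ (c s) (fun u : ↥I₁ => Kstar s u.1)) :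
    (∀ s ∈ I₁ \ I₂, ∀ t ∈ I₁ \ I₂,
      KΩ s t - ⟪a s, a t⟫ = Kstar s t - ⟪b s, b t⟫) ∧
    (∀ s ∈ I₂ \ I₁, ∀ t ∈ I₂ \ I₁,
      KΩ s t - ⟪a s, a t⟫ = Kstar s t - ⟪c s, c t⟫) := by
  have hJ (s : I) (u : ↥(I₁ ∩ I₂)) : Kstar s u = KΩ s u := by
    rcases (hcover.symm ▸ mem_univ s : s ∈ I₁ ∪ I₂) with hs | hs
    exacts [hK.2 (s, u) (Or.inl ⟨hs, u.2.1⟩), hK.2 (s, u) (Or.inr ⟨hs, u.2.2⟩)]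
  have hφ' (u v : ↥(I₁ ∩ I₂)) : Kstar u v = ⟪φ u, φ v⟫ := (hJ u v).trans (hφ u v)
  have ha' (s : I) : RepIn φ (a s) (fun u : ↥(I₁ ∩ I₂) => Kstar s u) :=
    ⟨(ha s).1, fun u => (hJ s u).trans ((ha s).2 u)⟩
  have hKa (s : I) (u : I) (hu : u ∈ I₁ ∩ I₂) : ⟪a s, a u⟫ = Kstar s u :=
    inner_representer_eq_of_mem hφ' ha' s ⟨u, hu⟩
  have hC : schurCompletion I₁ I₂ Kstar a = Kstar := huniq _
    ⟨isCovOn_schurCompletion hφ' ha' hψ₁ hψ₂, fun p hp => by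
      rw [schurCompletion, if_pos hp, hK.2 p hp]⟩
  refine ⟨fun s hs t ht => ?_, fun s hs t ht => ?_⟩
  · rw [← hK.2 (s, t) (Or.inl ⟨hs.1, ht.1⟩), inner_representer_eq_of_forall_mem
      inter_subset_right hφ' ha' hψ₂ hb (fun u => eq_inner_of_schurCompletion_eq hKa hC hs.2 u.2)]
  · rw [schurCompletion_comm] at hC
    rw [← hK.2 (s, t) (Or.inr ⟨hs.1, ht.1⟩), inner_representer_eq_of_forall_mem
      inter_subset_left hφ' ha' hψ₁ hc (fun u => eq_inner_of_schurCompletion_eq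
        (fun s u hu => hKa s u ⟨hu.2, hu.1⟩) hC hs.2 u.2)]

/-- Uniqueness forces Schur complement collapse: if `KΩ` on the 2-serrated domain
`Ω = (I₁×I₁) ∪ (I₂×I₂)` admits the unique completion `K⋆`, then
`K_{I₁}/K_J = K⋆/K_{I₂}` on `(I₁∖I₂)²` and `K_{I₂}/K_J = K⋆/K_{I₁}` on `(I₂∖I₁)²`.
The Schur complements w.r.t. `J = I₁∩I₂`, `I₂` and `I₁` are expressed via feature
realizations `(H,φ)`, `(H₂,ψ₂)`, `(H₁,ψ₁)` of `K_J`, `K⋆|_{I₂×I₂}`, `K⋆|_{I₁×I₁}` and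
representing vectors `a s`, `b s`, `c s` of the corresponding sections. -/
theorem uniqueness_schur_collapse {I : Type*} (I₁ I₂ : Set I)
    (hcover : I₁ ∪ I₂ = univ) (hne : (I₁ ∩ I₂).Nonempty)
    (KΩ : I → I → ℝ)
    (hpc : IsPartialCov ((I₁ ×ˢ I₁) ∪ (I₂ ×ˢ I₂)) KΩ)
    (Kstar : I → I → ℝ)
    (hK : IsCompletion ((I₁ ×ˢ I₁) ∪ (I₂ ×ˢ I₂)) KΩ Kstar)
    (huniq : ∀ K' : I → I → ℝ,
      IsCompletion ((I₁ ×ˢ I₁) ∪ (I₂ ×ˢ I₂)) KΩ K' → K' = Kstar)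
    (H : Type*) [NormedAddCommGroup H] [InnerProductSpace ℝ H]
    (φ : ↥(I₁ ∩ I₂) → H)
    (hφ : ∀ u v : ↥(I₁ ∩ I₂), KΩ u.1 v.1 = ⟪φ u, φ v⟫)
    (a : I → H)
    (ha : ∀ s : I, RepIn φ (a s) (fun u : ↥(I₁ ∩ I₂) => KΩ s u.1))
    (H₂ : Type*) [NormedAddCommGroup H₂] [InnerProductSpace ℝ H₂]
    (ψ₂ : ↥I₂ → H₂)
    (hψ₂ : ∀ u v : ↥I₂, Kstar u.1 v.1 = ⟪ψ₂ u, ψ₂ v⟫)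
    (b : I → H₂)
    (hb : ∀ s : I, RepIn ψ₂ (b s) (fun u : ↥I₂ => Kstar s u.1))
    (H₁ : Type*) [NormedAddCommGroup H₁] [InnerProductSpace ℝ H₁]
    (ψ₁ : ↥I₁ → H₁)
    (hψ₁ : ∀ u v : ↥I₁, Kstar u.1 v.1 = ⟪ψ₁ u, ψ₁ v⟫)
    (c : I → H₁)
    (hc : ∀ s : I, RepIn ψ₁ (c s) (fun u : ↥I₁ => Kstar s u.1)) :
    (∀ s ∈ I₁ \ I₂, ∀ t ∈ I₁ \ I₂,
      KΩ s t - ⟪a s, a t⟫ = Kstar s t - ⟪b s, b t⟫) ∧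
    (∀ s ∈ I₂ \ I₁, ∀ t ∈ I₂ \ I₁,
      KΩ s t - ⟪a s, a t⟫ = Kstar s t - ⟪c s, c t⟫) :=
  uniqueness_schur_collapse_general I₁ I₂ hcover KΩ Kstar hK huniq H φ hφ a ha H₂ ψ₂ hψ₂ b hb H₁ ψ₁
    hψ₁ c hc
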